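/- Let H be a finite simple graph with vertex set partitioned into a red set T and a nonempty blue set B, and let k ≥ 1. Construct the graph G on vertex set T ⊎ (B × {1,…,k}) in which (b,i) is adjacent to t ∈ T if and only if b is adjacent to t in H (and there are no other edges), with blocks C_0 := T and C_i := B × {i} for 1 ≤ i ≤ k. Then H has a set of at most k blue vertices such that every red vertex is adjacent to one of them if and only if G (with blocks C_0,…,C_k) has a colourful dominating set. -/

import Mathlib

/-!
Both sides are equivalent to the existence of a `k`-tuple `(b₀, …, b_{k-1})` of blue vertices
dominating every red vertex: a red-blue dominating set of size at most `k` can be listed as such a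
tuple, with repetitions and padded by an arbitrary blue vertex, and a colourful dominating set of
`G` is exactly a set `{(b₀, 0), …, (b_{k-1}, k-1)}` of copies, where `(bᵢ, i)` dominates the red
vertex `t` in `G` iff `bᵢ` does in `H`.
-/

/-- A colourful dominating set for a graph with blocks `C 0, C 1, …, C k`:
it contains exactly one vertex from each block `C i`, `i ≥ 1` (and none from
`C 0`), and every vertex of `C 0` belongs to it or is adjacent to one of its
vertices. -/
def ColourfulDominating {V : Type*} {k : ℕ} (G : SimpleGraph V)
    (C : Fin (k + 1) → Set V) (D : Set V) : Prop :=
  (∀ i, i ≠ 0 → (D ∩ C i).ncard = 1) ∧ D ∩ C 0 = ∅ ∧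
    ∀ v ∈ C 0, v ∈ D ∨ ∃ u ∈ D, G.Adj u v

open Set

theorem Set.Finite.exists_fin_subset_range {β : Type*} [Nonempty β] {S : Set β} (hS : S.Finite)
    {k : ℕ} (hk : S.ncard ≤ k) : ∃ f : Fin k → β, S ⊆ range f := by
  classical
  obtain ⟨s, rfl⟩ := hS.exists_finset_coe
  rw [ncard_coe_finset] at hk
  refine ⟨fun i => if h : (i : ℕ) < s.card then s.equivFin.symm ⟨i, h⟩ else Classical.arbitrary β,
    fun x hx => ⟨Fin.castLE hk (s.equivFin ⟨x, hx⟩), ?_⟩⟩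
  simp

section BlueCopies

variable {W : Type*} (H : SimpleGraph W) (T B : Set W) (k : ℕ)

def blueCopiesGraph : SimpleGraph (T ⊕ (B × Fin k)) :=
  SimpleGraph.fromRel fun a b =>
    Sum.elim (fun _ => False)
      (fun p : B × Fin k => Sum.elim (fun t : T => H.Adj p.1.1 t.1) (fun _ => False) b) a

def blueCopiesBlocks : Fin (k + 1) → Set (T ⊕ (B × Fin k)) := fun i =>
  if h : i = 0 then Set.range Sum.inl
  else {v | ∃ b : ↥B, v = Sum.inr (b, i.pred h)}

theorem blueCopiesBlocks_zero : blueCopiesBlocks T B k 0 = range Sum.inl :=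
  dif_pos rfl

theorem blueCopiesBlocks_succ (i : Fin k) :
    blueCopiesBlocks T B k i.succ = range fun b => Sum.inr (b, i) := by
  ext
  simp [blueCopiesBlocks, eq_comm]

variable {H T B k}

theorem blueCopiesGraph_adj_inl {u : T ⊕ (B × Fin k)} {t : T} :
    (blueCopiesGraph H T B k).Adj u (Sum.inl t) ↔ ∃ p : B × Fin k, u = Sum.inr p ∧ H.Adj p.1 t := by
  rcases u with _ | p <;> simp [blueCopiesGraph]

theorem ncard_inter_blueCopiesBlocks_succ_eq_one_iff {D : Set (T ⊕ (B × Fin k))} {i : Fin k} :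
    (D ∩ blueCopiesBlocks T B k i.succ).ncard = 1 ↔ ∃ b, ∀ b', Sum.inr (b', i) ∈ D ↔ b' = b := by
  rw [blueCopiesBlocks_succ, inter_comm, ← image_preimage_eq_range_inter,
    ncard_image_of_injective _ fun b b' h => by simpa using h, ncard_eq_one]
  simp only [Set.ext_iff, mem_preimage, mem_singleton_iff]

theorem colourfulDominating_range_of_forall_exists_adj {f : Fin k → B}
    (hf : ∀ t : T, ∃ i, H.Adj (f i) t) :
    ColourfulDominating (blueCopiesGraph H T B k) (blueCopiesBlocks T B k)
      (range fun i => Sum.inr (f i, i)) := by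
  refine ⟨fun i hi => ?_, ?_, ?_⟩
  · obtain ⟨j, rfl⟩ := Fin.exists_succ_eq.2 hi
    refine ncard_inter_blueCopiesBlocks_succ_eq_one_iff.2 ⟨f j, fun b => ?_⟩
    simp [eq_comm]
  · rw [blueCopiesBlocks_zero]
    exact (isCompl_range_inl_range_inr.disjoint.symm.mono_left
      (range_comp_subset_range (fun i => (f i, i)) Sum.inr)).inter_eq
  · rw [blueCopiesBlocks_zero]
    rintro _ ⟨t, rfl⟩
    obtain ⟨i, hi⟩ := hf t
    exact .inr ⟨_, mem_range_self i, blueCopiesGraph_adj_inl.2 ⟨_, rfl, hi⟩⟩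

variable (H T B k)

theorem exists_colourfulDominating_blueCopies_iff :
    (∃ D, ColourfulDominating (blueCopiesGraph H T B k) (blueCopiesBlocks T B k) D) ↔
      ∃ f : Fin k → B, ∀ t : T, ∃ i, H.Adj (f i) t := by
  refine ⟨fun ⟨D, hcard, hzero, hdom⟩ => ?_,
    fun ⟨f, hf⟩ => ⟨_, colourfulDominating_range_of_forall_exists_adj hf⟩⟩
  choose f hf using fun i : Fin k =>
    ncard_inter_blueCopiesBlocks_succ_eq_one_iff.1 (hcard i.succ i.succ_ne_zero)
  refine ⟨f, fun t => ?_⟩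
  have ht : Sum.inl t ∈ blueCopiesBlocks T B k 0 := by
    rw [blueCopiesBlocks_zero]
    exact mem_range_self t
  rcases hdom _ ht with htD | ⟨u, hu, hadj⟩
  · exact absurd (hzero.subset ⟨htD, ht⟩) (notMem_empty _)
  · obtain ⟨⟨b, i⟩, rfl, hbt⟩ := blueCopiesGraph_adj_inl.1 hadj
    exact ⟨i, (hf i b).1 hu ▸ hbt⟩

theorem exists_ncard_le_forall_exists_adj_iff [Finite W] (hB : B.Nonempty) :
    (∃ S : Set W, S.ncard ≤ k ∧ S ⊆ B ∧ ∀ t ∈ T, ∃ b ∈ S, H.Adj b t) ↔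
      ∃ f : Fin k → B, ∀ t : T, ∃ i, H.Adj (f i) t := by
  constructor
  · rintro ⟨S, hSk, hSB, hdom⟩
    have := hB.to_subtype
    have hpre : ((↑) ⁻¹' S : Set B).ncard ≤ k := by
      rwa [ncard_preimage_of_injective_subset_range Subtype.val_injective (by simpa using hSB)]
    obtain ⟨f, hf⟩ := (toFinite _).exists_fin_subset_range hpre
    refine ⟨f, fun t => ?_⟩
    obtain ⟨b, hbS, hbt⟩ := hdom t t.2
    obtain ⟨i, hi⟩ := hf (show (⟨b, hSB hbS⟩ : B) ∈ _ from hbS)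
    exact ⟨i, hi ▸ hbt⟩
  · rintro ⟨f, hf⟩
    refine ⟨range fun i => (f i : W), ?_, ?_, fun t ht => ?_⟩
    · simpa [← Nat.card_coe_set_eq] using Finite.card_range_le fun i => (f i : W)
    · rintro _ ⟨i, rfl⟩
      exact (f i).2
    · obtain ⟨i, hi⟩ := hf ⟨t, ht⟩
      exact ⟨_, mem_range_self i, hi⟩

end BlueCopies

theorem redBlue_iff_colourfulDominating {W : Type*} [Fintype W]
    (H : SimpleGraph W) (T B : Set W) (hB : B.Nonempty) {k : ℕ} :
    let Vt := ↥T ⊕ (↥B × Fin k)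
    let G : SimpleGraph Vt := SimpleGraph.fromRel (fun a b =>
      match a, b with
      | Sum.inr p, Sum.inl t => H.Adj p.1.1 t.1
      | _, _ => False)
    let C : Fin (k + 1) → Set Vt := fun i =>
      if h : i = 0 then Set.range Sum.inl
      else {v | ∃ b : ↥B, v = Sum.inr (b, i.pred h)}
    (∃ S : Set W, S.ncard ≤ k ∧ S ⊆ B ∧ ∀ t ∈ T, ∃ b ∈ S, H.Adj b t) ↔
      ∃ D : Set Vt, ColourfulDominating G C D := by
  intro Vt G C
  have hG : G = blueCopiesGraph H T B k := by
    ext (_ | _) (_ | _) <;> simp [G, blueCopiesGraph]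
  rw [hG]
  exact (exists_ncard_le_forall_exists_adj_iff H T B k hB).trans
    (exists_colourfulDominating_blueCopies_iff H T B k).symm
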